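/- Let F be a set of connected graphs and set n_F := min_{H∈F}|V(H)|. Let G be a graph, X ⊆ V(G), and Y ⊆ V(G) such that G − Y contains no graph of F as a minor, and let X' ⊆ X \ Y with |X'| = n_F. Then strictly fewer than n_F connected components C of G − X contain a connected vertex set S ⊆ V(C) \ Y such that every vertex of X' has a neighbor in S. -/

import Mathlib

/-! If `n_F` components `C_i` carried such sets `S_i`, pair each `S_i` with a distinct vertex
`x_i ∈ X'`. The sets `{x_i} ∪ S_i` avoid `Y`, are connected, are pairwise disjoint (distinct
components of `G − X` are disjoint and `X' ⊆ X`), and `x_i` has a neighbour in every `S_j`: they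
are the branch sets of a `K_{n_F}`-minor of `G − Y`. A smallest graph of `F` has `n_F` vertices,
so it is a minor of `K_{n_F}`, a contradiction. -/

namespace FDel

open scoped Classical

noncomputable section

/-- Reachability inside the vertex set `S` of a simple graph. -/
def ReachIn {V : Type*} (G : SimpleGraph V) (S : Set V) (a b : V) : Prop :=
  Relation.ReflTransGen (fun u v => G.Adj u v ∧ u ∈ S ∧ v ∈ S) a b

/-- `C` is (the vertex set of) a connected component of the subgraph of `G` induced by `S`. -/
def IsCompOf {V : Type*} (G : SimpleGraph V) (S C : Set V) : Prop :=
  ∃ v ∈ S, C = {w | w ∈ S ∧ ReachIn G S v w}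

/-- `tdLE G n S` expresses that the treedepth of the subgraph of `G` induced by `S` is at
most `n`: the empty graph has treedepth `0`, and `G[S]` has treedepth at most `n+1` iff from
every connected component one may delete a vertex leaving treedepth at most `n`. -/
def tdLE {V : Type*} (G : SimpleGraph V) : ℕ → Set V → Prop
  | 0, S => S = ∅
  | n + 1, S => ∀ C, IsCompOf G S C → ∃ v ∈ C, tdLE G n (C \ {v})

/-- The treedepth of `G`. -/
def treedepth {V : Type*} (G : SimpleGraph V) : ℕ := sInf {n | tdLE G n Set.univ}

/-- A minor model of `H` in `G` whose branch sets are contained in `A`: nonempty, connected,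
pairwise disjoint branch sets, with every edge of `H` realized between the branch sets. -/
structure IsMinorModelOn {W V : Type*} (H : SimpleGraph W) (G : SimpleGraph V)
    (A : Set V) (φ : W → Set V) : Prop where
  sub : ∀ w, φ w ⊆ A
  nonempty : ∀ w, (φ w).Nonempty
  conn : ∀ w, ∀ a ∈ φ w, ∀ b ∈ φ w, ReachIn G (φ w) a b
  disj : ∀ w w', w ≠ w' → Disjoint (φ w) (φ w')
  edge : ∀ w w', H.Adj w w' → ∃ a ∈ φ w, ∃ b ∈ φ w', G.Adj a b

/-- A (finite) graph given abstractly, as a simple graph on `Fin n`. -/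
structure FinGraph where
  n : ℕ
  adj : SimpleGraph (Fin n)

/-- `G` has `H` as a minor with all branch sets inside `A` (i.e. `G[A]` has an `H`-minor). -/
def HasMinorOn {V : Type*} (G : SimpleGraph V) (A : Set V) (H : FinGraph) : Prop :=
  ∃ φ, IsMinorModelOn H.adj G A φ

/-- `Y` is an `F`-deletion set of `G[A]`: `Y ⊆ A` and `G[A ∖ Y]` has no `F`-minor. -/
def FDelSetOn {V : Type*} (F : Set FinGraph) (G : SimpleGraph V) (A Y : Set V) : Prop :=
  Y ⊆ A ∧ ∀ H ∈ F, ¬ HasMinorOn G (A \ Y) H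

/-- The minimum size `opt_F(G[A])` of an `F`-deletion set of `G[A]`. -/
def optF {V : Type*} (F : Set FinGraph) (G : SimpleGraph V) (A : Set V) : ℕ :=
  sInf (Set.ncard '' {Y | FDelSetOn F G A Y})

/-- `Y` is an optimal `F`-deletion set of `G`. -/
def IsOptFDel {V : Type*} (F : Set FinGraph) (G : SimpleGraph V) (Y : Set V) : Prop :=
  FDelSetOn F G Set.univ Y ∧ ∀ Y', FDelSetOn F G Set.univ Y' → Y.ncard ≤ Y'.ncard

lemma nonempty_embedding_fin_of_le_ncard {α : Type*} {s : Set α} {n : ℕ} (h : n ≤ s.ncard) :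
    Nonempty (Fin n ↪ s) := by
  obtain ⟨f, -⟩ := Fin.Embedding.exists_embedding_disjoint_range_of_add_le_ENat_card
    (s := (∅ : Set s)) (n := n) (by simpa using (Nat.cast_le.mpr h).trans s.ncard_le_encard)
  exact ⟨f⟩

section

variable {V : Type*} {G : SimpleGraph V}

lemma ReachIn.mono {S T : Set V} (h : S ⊆ T) {a b : V} (hr : ReachIn G S a b) :
    ReachIn G T a b :=
  Relation.ReflTransGen.mono (fun _ _ ⟨ha, hu, hv⟩ => ⟨ha, h hu, h hv⟩) _ _ hr

lemma ReachIn.symm {S : Set V} {a b : V} (h : ReachIn G S a b) : ReachIn G S b a :=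
  have : Std.Symm (fun u v => G.Adj u v ∧ u ∈ S ∧ v ∈ S) :=
    ⟨fun _ _ ⟨ha, hu, hv⟩ => ⟨ha.symm, hv, hu⟩⟩
  Relation.ReflTransGen.stdSymm.symm _ _ h

lemma reachIn_insert_of_adj {S : Set V} {x s : V} (hs : s ∈ S) (hxs : G.Adj x s)
    (hS : ∀ a ∈ S, ∀ b ∈ S, ReachIn G S a b) :
    ∀ a ∈ insert x S, ∀ b ∈ insert x S, ReachIn G (insert x S) a b := by
  have hx : ∀ b ∈ S, ReachIn G (insert x S) x b := fun b hb =>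
    .head ⟨hxs, S.mem_insert x, S.mem_insert_of_mem x hs⟩ ((hS s hs b hb).mono (S.subset_insert x))
  rintro a (rfl | ha) b (rfl | hb)
  · exact .refl
  · exact hx b hb
  · exact (hx a ha).symm
  · exact (hS a ha b hb).mono (S.subset_insert x)

lemma IsCompOf.subset {A C : Set V} (h : IsCompOf G A C) : C ⊆ A := by
  obtain ⟨v, -, rfl⟩ := h
  exact fun _ hw => hw.1

lemma IsCompOf.disjoint_of_ne {A C C' : Set V} (h : IsCompOf G A C) (h' : IsCompOf G A C')
    (hne : C ≠ C') : Disjoint C C' := by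
  obtain ⟨v, -, rfl⟩ := h
  obtain ⟨v', -, rfl⟩ := h'
  refine Set.disjoint_left.mpr fun u ⟨_, hvu⟩ ⟨_, hv'u⟩ => hne ?_
  ext w
  exact ⟨fun ⟨hw, hvw⟩ => ⟨hw, hv'u.trans (hvu.symm.trans hvw)⟩,
    fun ⟨hw, hv'w⟩ => ⟨hw, hvu.trans (hv'u.symm.trans hv'w)⟩⟩

lemma IsMinorModelOn.comp_embedding {W ι : Type*} {H : SimpleGraph W} {A : Set V}
    {φ : ι → Set V} (hφ : IsMinorModelOn (⊤ : SimpleGraph ι) G A φ) (f : W ↪ ι) :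
    IsMinorModelOn H G A (φ ∘ f) where
  sub w := hφ.sub (f w)
  nonempty w := hφ.nonempty (f w)
  conn w := hφ.conn (f w)
  disj w w' hne := hφ.disj (f w) (f w') (f.injective.ne hne)
  edge w w' hadj := hφ.edge (f w) (f w') (f.injective.ne hadj.ne)

lemma isMinorModelOn_top_insert {ι : Type*} {A : Set V} (x : ι → V) (S : ι → Set V)
    (hx : Function.Injective x) (hxA : ∀ i, x i ∈ A) (hSA : ∀ i, S i ⊆ A)
    (hS : ∀ i, ∀ a ∈ S i, ∀ b ∈ S i, ReachIn G (S i) a b)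
    (hSdisj : Pairwise fun i j => Disjoint (S i) (S j)) (hxS : ∀ i j, x i ∉ S j)
    (hadj : ∀ i j, ∃ s ∈ S j, G.Adj (x i) s) :
    IsMinorModelOn (⊤ : SimpleGraph ι) G A (fun i => insert (x i) (S i)) where
  sub i := Set.insert_subset (hxA i) (hSA i)
  nonempty i := Set.insert_nonempty _ _
  conn i :=
    have ⟨_, hs, hxs⟩ := hadj i i
    reachIn_insert_of_adj hs hxs (hS i)
  disj i j hij := by
    refine Set.disjoint_insert_left.mpr ⟨?_, Set.disjoint_insert_right.mpr ⟨?_, hSdisj hij⟩⟩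
    · exact Set.mem_insert_iff.not.mpr (not_or.mpr ⟨hx.ne hij, hxS i j⟩)
    · exact hxS j i
  edge i j _ :=
    have ⟨s, hs, hxs⟩ := hadj i j
    ⟨x i, Set.mem_insert _ _, s, Set.mem_insert_of_mem _ hs, hxs⟩

end

theorem stmt5_general {V : Type*} (F : Set FinGraph) (hFne : F.Nonempty)
    (G : SimpleGraph V) (X Y : Set V)
    (hY : ∀ H ∈ F, ¬ HasMinorOn G Yᶜ H)
    (X' : Set V) (hX'sub : X' ⊆ X \ Y)
    (hX'card : X'.ncard = sInf {m | ∃ H ∈ F, m = H.n}) :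
    {C : Set V | IsCompOf G Xᶜ C ∧ ∃ S : Set V, S ⊆ C \ Y ∧ S.Nonempty ∧
        (∀ a ∈ S, ∀ b ∈ S, ReachIn G S a b) ∧ (∀ x ∈ X', ∃ s ∈ S, G.Adj x s)}.ncard
      < sInf {m | ∃ H ∈ F, m = H.n} := by
  obtain ⟨H, hHF, hHn⟩ : sInf {m | ∃ H ∈ F, m = H.n} ∈ {m | ∃ H ∈ F, m = H.n} :=
    Nat.sInf_mem (let ⟨H, hH⟩ := hFne; ⟨H.n, H, hH, rfl⟩)
  rw [hHn] at hX'card ⊢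
  by_contra! hcard
  obtain ⟨c⟩ := nonempty_embedding_fin_of_le_ncard hcard
  obtain ⟨x⟩ := nonempty_embedding_fin_of_le_ncard hX'card.ge
  choose S hSC _ hSconn hSadj using fun i => (c i).2.2
  have hC : ∀ i, IsCompOf G Xᶜ (c i) := fun i => (c i).2.1
  have hxX : ∀ i, (x i : V) ∈ X \ Y := fun i => hX'sub (x i).2
  have hSdisj : Pairwise fun i j => Disjoint (S i) (S j) := fun i j hij =>
    ((hC i).disjoint_of_ne (hC j) (Subtype.val_injective.ne (c.injective.ne hij))).mono
      (fun _ ha => (hSC i ha).1) (fun _ ha => (hSC j ha).1)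
  have hxS : ∀ i j, (x i : V) ∉ S j := fun i j hxS => (hC j).subset (hSC j hxS).1 (hxX i).1
  have hK : IsMinorModelOn (⊤ : SimpleGraph (Fin H.n)) G Yᶜ (fun i => insert (x i : V) (S i)) :=
    isMinorModelOn_top_insert _ S (Subtype.val_injective.comp x.injective) (fun i => (hxX i).2)
      (fun i _ ha => (hSC i ha).2) hSconn hSdisj hxS (fun i j => hSadj j _ (x i).2)
  exact hY H hHF ⟨_, hK.comp_embedding (.refl _)⟩

/-- Let `F` be a set of connected graphs and `n_F := min_{H∈F} |V(H)|`.
Let `G` be a graph, `X, Y ⊆ V(G)` with `G − Y` `F`-minor-free, and `X' ⊆ X ∖ Y` with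
`|X'| = n_F`. Then strictly fewer than `n_F` connected components `C` of `G − X` contain a
connected vertex set `S ⊆ C ∖ Y` such that every vertex of `X'` has a neighbor in `S`. -/
theorem stmt5 {V : Type*} [Fintype V] (F : Set FinGraph) (hFne : F.Nonempty)
    (hFconn : ∀ H ∈ F, H.adj.Connected)
    (G : SimpleGraph V) (X Y : Set V)
    (hY : ∀ H ∈ F, ¬ HasMinorOn G Yᶜ H)
    (X' : Set V) (hX'sub : X' ⊆ X \ Y)
    (hX'card : X'.ncard = sInf {m | ∃ H ∈ F, m = H.n}) :
    {C : Set V | IsCompOf G Xᶜ C ∧ ∃ S : Set V, S ⊆ C \ Y ∧ S.Nonempty ∧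
        (∀ a ∈ S, ∀ b ∈ S, ReachIn G S a b) ∧ (∀ x ∈ X', ∃ s ∈ S, G.Adj x s)}.ncard
      < sInf {m | ∃ H ∈ F, m = H.n} :=
  stmt5_general F hFne G X Y hY X' hX'sub hX'card

end

end FDel
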